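/- arXiv:1208.5822 — 5 statements merged into one kernel-verified Lean document; each statement's English description precedes it below -/
import Mathlib

section
/- For every x in [ε, Λ] one has Aw(x) > w(x), where A is applied to the function w itself. -/
open Real Set MeasureTheory intervalIntegral

/-- The function `w(x) = (4ε/λ)·√(ε/(Λx))`. -/
noncomputable def wfun (lam ε Λ : ℝ) (x : ℝ) : ℝ :=
  (4 * ε / lam) * Real.sqrt (ε / (Λ * x))

/-- The nonlinear integral operator `A`. -/
noncomputable def opA (lam ε Λ : ℝ) (u : ℝ → ℝ) (x : ℝ) : ℝ :=
  (lam / 2) * ∫ y in ε..Λ, (1 / (y + x + |y - x|)) * (y * u y / (y + (u y) ^ 2))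

/-- Membership in the set `V`: continuous on `[ε,Λ]` and `w(x) ≤ u(x) ≤ (λ/4)√Λ` there. -/
def memV (lam ε Λ : ℝ) (u : ℝ → ℝ) : Prop :=
  ContinuousOn u (Set.Icc ε Λ) ∧
    ∀ x ∈ Set.Icc ε Λ, wfun lam ε Λ x ≤ u x ∧ u x ≤ (lam / 4) * Real.sqrt Λ

/-!
Since `y + x + |y - x| = 2 max(x, y)` and `w(y) = C / √y` with `w(y)² ≤ (16 (ε/Λ) / λ²) y`
for `y ≥ ε`, the factor `y / (y + w(y)²)` is at least `1 / D` with `D = 1 + 16 (ε/Λ) / λ²`. Hence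
`Aw(x) ≥ (λ C / 4D) ∫_ε^Λ y^(-1/2) / max(x, y) dy = (λ / 2D) (2 - √(ε/x) - √(x/Λ)) w(x)`,
and since `2 - t - s ≥ 1 - t s` for `t, s ≤ 1` the bracket is at least `1 - √(ε/Λ)`.
The smallness assumption on `ε/Λ` is exactly what makes `λ (1 - √(ε/Λ)) > 2D`.
-/

lemma integral_inv_sqrt {a b : ℝ} (ha : 0 < a) (hb : 0 < b) :
    ∫ y in a..b, (√y)⁻¹ = 2 * √b - 2 * √a := by
  have hpos : ∀ y ∈ uIcc a b, 0 < y := fun y hy ↦ lt_min ha hb |>.trans_le hy.1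
  refine integral_eq_sub_of_hasDerivAt (f := fun y ↦ 2 * √y) (fun y hy ↦ ?_) ?_
  · refine ((hasDerivAt_sqrt (hpos y hy).ne').const_mul 2).congr_deriv ?_
    field_simp
  · exact ContinuousOn.intervalIntegrable fun y hy ↦
      (continuous_sqrt.continuousAt.inv₀ (sqrt_pos.2 (hpos y hy)).ne').continuousWithinAt

lemma integral_inv_sqrt_div_self {a b : ℝ} (ha : 0 < a) (hb : 0 < b) :
    ∫ y in a..b, (√y)⁻¹ / y = 2 / √a - 2 / √b := by
  have hpos : ∀ y ∈ uIcc a b, 0 < y := fun y hy ↦ lt_min ha hb |>.trans_le hy.1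
  rw [← neg_sub_neg]
  refine integral_eq_sub_of_hasDerivAt (f := fun y ↦ -(2 / √y)) (fun y hy ↦ ?_) ?_
  · have hy := hpos y hy
    refine ((((hasDerivAt_sqrt hy.ne').inv (sqrt_pos.2 hy).ne').const_mul 2).neg.congr_deriv ?_)
      |>.congr_of_eventuallyEq (by filter_upwards with z; simp [div_eq_mul_inv])
    field_simp
    rw [sq_sqrt hy.le]
  · refine ContinuousOn.intervalIntegrable fun y hy ↦ ?_
    have hy := hpos y hy
    exact ((continuous_sqrt.continuousAt.inv₀ (sqrt_pos.2 hy).ne').div continuousAt_id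
      hy.ne').continuousWithinAt

lemma add_add_abs_sub_eq_two_mul_max (x y : ℝ) : y + x + |y - x| = 2 * max x y := by
  rcases le_total x y with h | h
  · rw [abs_of_nonneg (sub_nonneg.2 h), max_eq_right h]; ring
  · rw [abs_of_nonpos (sub_nonpos.2 h), max_eq_left h]; ring

lemma continuousOn_inv_sqrt_div_max (c : ℝ) :
    ContinuousOn (fun y ↦ (√y)⁻¹ / max c y) (Ioi 0) :=
  (continuous_sqrt.continuousOn.inv₀ fun _ hy ↦ (sqrt_pos.2 hy).ne').div
    (continuousOn_const.sup continuousOn_id) fun _ hy ↦ (lt_max_of_lt_right hy).ne'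

lemma integral_inv_sqrt_div_max {a c b : ℝ} (ha : 0 < a) (hac : a ≤ c) (hcb : c ≤ b) :
    ∫ y in a..b, (√y)⁻¹ / max c y = 2 * (2 - √a / √c - √c / √b) / √c := by
  have hc : 0 < c := ha.trans_le hac
  have hb : 0 < b := hc.trans_le hcb
  have hint {p q : ℝ} (hp : 0 < p) (hpq : p ≤ q) :
      IntervalIntegrable (fun y ↦ (√y)⁻¹ / max c y) volume p q :=
    ((continuousOn_inv_sqrt_div_max c).mono fun y hy ↦
      hp.trans_le (uIcc_of_le hpq ▸ hy).1).intervalIntegrable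
  rw [← integral_add_adjacent_intervals (hint ha hac) (hint hc hcb),
    integral_congr (a := a) (b := c) (g := fun y ↦ (√y)⁻¹ / c) fun y hy ↦ by
      rw [uIcc_of_le hac] at hy; simp [max_eq_left hy.2],
    integral_congr (a := c) (b := b) (g := fun y ↦ (√y)⁻¹ / y) fun y hy ↦ by
      rw [uIcc_of_le hcb] at hy; simp [max_eq_right hy.1],
    intervalIntegral.integral_div, integral_inv_sqrt ha hc, integral_inv_sqrt_div_self hc hb]
  have := sqrt_pos.2 hc
  have := sqrt_pos.2 hb
  field_simp
  linear_combination (√c * √b - √a * √b) * sq_sqrt hc.le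

lemma two_mul_one_sub_sqrt_div_le_integral_inv_sqrt_div_max {a c b : ℝ} (ha : 0 < a)
    (hac : a ≤ c) (hcb : c ≤ b) :
    2 * (1 - √(a / b)) / √c ≤ ∫ y in a..b, (√y)⁻¹ / max c y := by
  have hc : 0 < c := ha.trans_le hac
  have hsc := sqrt_pos.2 hc
  have hsb := sqrt_pos.2 (hc.trans_le hcb)
  have ht : √a / √c ≤ 1 := div_le_one_of_le₀ (sqrt_le_sqrt hac) hsc.le
  have hs : √c / √b ≤ 1 := div_le_one_of_le₀ (sqrt_le_sqrt hcb) hsb.le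
  have hts : √a / √c * (√c / √b) = √(a / b) := by
    rw [sqrt_div ha.le]; field_simp
  rw [integral_inv_sqrt_div_max ha hac hcb]
  gcongr 2 * ?_ / _
  nlinarith [mul_nonneg (sub_nonneg.2 ht) (sub_nonneg.2 hs)]

lemma div_le_mul_div_add_sq {y u D : ℝ} (hy : 0 < y) (hu : 0 ≤ u) (hD : 0 < D)
    (hsq : u ^ 2 ≤ (D - 1) * y) : u / D ≤ y * u / (y + u ^ 2) := by
  rw [div_le_div_iff₀ hD (by positivity)]
  nlinarith [mul_le_mul_of_nonneg_left hsq hu]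

section

variable {lam ε Λ : ℝ}

lemma wfun_eq_div_sqrt {y : ℝ} (hy : 0 ≤ y) :
    wfun lam ε Λ y = 4 * ε / lam * √(ε / Λ) / √y := by
  rw [wfun, div_mul_eq_div_div, sqrt_div' _ hy, ← mul_div_assoc]

lemma wfun_nonneg (hlam : 0 ≤ lam) (hε : 0 ≤ ε) (y : ℝ) : 0 ≤ wfun lam ε Λ y := by
  unfold wfun; positivity

lemma wfun_sq_le (hε : 0 < ε) (hΛ : 0 ≤ Λ) {y : ℝ} (hy : ε ≤ y) :
    wfun lam ε Λ y ^ 2 ≤ (16 * (ε / Λ) / lam ^ 2) * y := by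
  have hy0 : 0 < y := hε.trans_le hy
  calc wfun lam ε Λ y ^ 2 = (16 * (ε / Λ) / lam ^ 2) * (ε ^ 2 / y) := by
        rw [wfun, mul_pow, sq_sqrt (by positivity)]
        ring
    _ ≤ (16 * (ε / Λ) / lam ^ 2) * y := by
        gcongr
        rw [div_le_iff₀ hy0]
        nlinarith

lemma continuousOn_opA_integrand {u : ℝ → ℝ} {s : Set ℝ} (hs : s ⊆ Ioi 0)
    (hu : ContinuousOn u s) (x : ℝ) :
    ContinuousOn (fun y ↦ (1 / (y + x + |y - x|)) * (y * u y / (y + u y ^ 2))) s := by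
  refine (continuousOn_const.div (by fun_prop) fun y hy ↦ ?_).mul
    ((continuousOn_id.mul hu).div (continuousOn_id.add (hu.pow 2)) fun y hy ↦ ?_)
  · rw [add_add_abs_sub_eq_two_mul_max]
    exact (mul_pos two_pos (lt_max_of_lt_right (hs hy))).ne'
  · exact (add_pos_of_pos_of_nonneg (hs hy) (sq_nonneg _)).ne'

lemma continuousOn_wfun : ContinuousOn (wfun lam ε Λ) (Ioi 0) :=
  (continuousOn_const.div continuous_sqrt.continuousOn fun _ hy ↦ (sqrt_pos.2 hy).ne').congr
    fun _ hy ↦ wfun_eq_div_sqrt (le_of_lt hy)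

lemma integral_div_two_mul_max_le_opA {u : ℝ → ℝ} {D x : ℝ} (hlam : 0 ≤ lam) (hε : 0 < ε)
    (hεx : ε ≤ x) (hxΛ : x ≤ Λ) (hD : 0 < D) (hu : ContinuousOn u (Icc ε Λ))
    (hu_nonneg : ∀ y ∈ Icc ε Λ, 0 ≤ u y) (hu_sq : ∀ y ∈ Icc ε Λ, u y ^ 2 ≤ (D - 1) * y) :
    lam / 2 * ∫ y in ε..Λ, u y / (2 * D * max x y) ≤ opA lam ε Λ u x := by
  have hεΛ := hεx.trans hxΛ
  have hpos : Icc ε Λ ⊆ Ioi 0 := fun y hy ↦ hε.trans_le hy.1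
  have hint {f : ℝ → ℝ} (hf : ContinuousOn f (Icc ε Λ)) : IntervalIntegrable f volume ε Λ :=
    hf.intervalIntegrable_of_Icc hεΛ
  refine mul_le_mul_of_nonneg_left (integral_mono_on hεΛ ?_
    (hint (continuousOn_opA_integrand hpos hu x)) fun y hy ↦ ?_) (by positivity)
  · exact hint (hu.div (continuousOn_const.mul (continuousOn_const.sup continuousOn_id))
      fun y hy ↦ (mul_pos (by positivity) (lt_max_of_lt_right (hpos hy))).ne')
  · have hy0 : 0 < y := hpos hy
    rw [add_add_abs_sub_eq_two_mul_max, mul_comm 2 D, mul_assoc, ← div_div, div_eq_mul_one_div,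
      mul_comm]
    refine mul_le_mul_of_nonneg_left ?_ (by have := lt_max_of_lt_right (b := x) hy0; positivity)
    exact div_le_mul_div_add_sq hy0 (hu_nonneg y hy) hD (hu_sq y hy)

end

lemma two_mul_one_add_lt_mul_one_sub_sqrt {lam r : ℝ} (hlam : 2 < lam) (hr : 0 < r)
    (hr_le : r ≤ ((√(lam ^ 2 + 128 * (lam - 2)) - lam) / 64) ^ 2) :
    2 * (1 + 16 * r / lam ^ 2) < lam * (1 - √r) := by
  set Q := √(lam ^ 2 + 128 * (lam - 2))
  have hQ : Q ^ 2 = lam ^ 2 + 128 * (lam - 2) := sq_sqrt (by nlinarith)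
  have hlamQ : lam ≤ Q := (le_sqrt (by linarith) (by nlinarith)).2 (by nlinarith)
  have hs : √r ≤ (Q - lam) / 64 := (sqrt_le_sqrt hr_le).trans_eq (sqrt_sq (by linarith))
  have hr_sq : √r ^ 2 = r := sq_sqrt hr.le
  have hkey : 32 * r + lam * √r ≤ lam - 2 := by
    have h64 : 64 * √r + lam ≤ Q := by linarith
    nlinarith [mul_self_le_mul_self (by positivity) h64]
  have hsmall : 16 * r / lam ^ 2 < 16 * r := div_lt_self (by positivity) (by nlinarith)
  linarith

theorem stmt_1_general (ε Λ lam : ℝ) (hε : 0 < ε) (hlam : 2 < lam)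
    (hratio : ε / Λ ≤ min (1 / 16)
      (((Real.sqrt (lam ^ 2 + 128 * (lam - 2)) - lam) / 64) ^ 2)) :
    ∀ x ∈ Set.Icc ε Λ, wfun lam ε Λ x < opA lam ε Λ (wfun lam ε Λ) x := by
  rintro x ⟨hεx, hxΛ⟩
  have hx : 0 < x := hε.trans_le hεx
  have hΛ : 0 < Λ := hx.trans_le hxΛ
  set r := ε / Λ
  set C := 4 * ε / lam * √r
  set D := 1 + 16 * r / lam ^ 2
  have hgain : 2 * D < lam * (1 - √r) :=
    two_mul_one_add_lt_mul_one_sub_sqrt hlam (by positivity) (hratio.trans (min_le_right _ _))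
  have hwC {y : ℝ} (hy : 0 ≤ y) : wfun lam ε Λ y = C / √y := wfun_eq_div_sqrt hy
  have hw : ∀ y ∈ uIcc ε Λ,
      wfun lam ε Λ y / (2 * D * max x y) = C / (2 * D) * ((√y)⁻¹ / max x y) := fun y hy ↦ by
    rw [hwC ((le_min hε.le hΛ.le).trans hy.1), div_mul_div_comm, ← div_eq_mul_inv]
  calc wfun lam ε Λ x = C / √x := hwC hx.le
    _ < lam * (1 - √r) / (2 * D) * (C / √x) :=
      lt_mul_of_one_lt_left (by positivity) ((one_lt_div (by positivity)).2 hgain)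
    _ = lam / 2 * (C / (2 * D)) * (2 * (1 - √r) / √x) := by ring
    _ ≤ lam / 2 * (C / (2 * D)) * ∫ y in ε..Λ, (√y)⁻¹ / max x y := by
      gcongr
      exact two_mul_one_sub_sqrt_div_le_integral_inv_sqrt_div_max hε hεx hxΛ
    _ = lam / 2 * ∫ y in ε..Λ, wfun lam ε Λ y / (2 * D * max x y) := by
      rw [integral_congr hw, intervalIntegral.integral_const_mul, mul_assoc]
    _ ≤ opA lam ε Λ (wfun lam ε Λ) x :=
      integral_div_two_mul_max_le_opA (by positivity) hε hεx hxΛ (by positivity)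
        (continuousOn_wfun.mono fun y hy ↦ hε.trans_le hy.1)
        (fun y _ ↦ wfun_nonneg (by positivity) hε.le y)
        fun y hy ↦ (wfun_sq_le hε hΛ.le hy.1).trans_eq (by ring)

theorem stmt_1 (ε Λ lam : ℝ) (hε : 0 < ε) (hεΛ : ε < Λ) (hlam : 2 < lam)
    (hratio : ε / Λ ≤ min (1 / 16)
      (((Real.sqrt (lam ^ 2 + 128 * (lam - 2)) - lam) / 64) ^ 2)) :
    ∀ x ∈ Set.Icc ε Λ, wfun lam ε Λ x < opA lam ε Λ (wfun lam ε Λ) x :=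
  stmt_1_general ε Λ lam hε hlam hratio
end

section
/- For all u, v ∈ V one has the Lipschitz bound ‖Au − Av‖_{C[ε,Λ]} ≤ (λ/4)·(1 + ln(Λ/ε))·‖u − v‖_{C[ε,Λ]}, where ‖·‖_{C[ε,Λ]} denotes the supremum norm on [ε,Λ]; in particular the operator A : V → V is continuous. -/
open Real Set MeasureTheory intervalIntegral

/-! For `y > 0` the map `t ↦ y t / (y + t²)` is 1-Lipschitz, and the kernel
`1 / (y + x + |y - x|) = 1 / (2 max(x, y))` has integral at most `(1 + log (Λ / ε)) / 2` over
`[ε, Λ]` for every `x ∈ [ε, Λ]` (it is `1/(2x)` left of `x` and `1/(2y)` right of it). Hence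
`|Au(x) - Av(x)| ≤ (λ/4)(1 + log (Λ/ε)) sup |u - v|` pointwise; take the supremum over `x`. -/

lemma abs_mul_div_add_sq_sub_le {y : ℝ} (hy : 0 < y) (a b : ℝ) :
    |y * a / (y + a ^ 2) - y * b / (y + b ^ 2)| ≤ |a - b| := by
  have ha : 0 < y + a ^ 2 := by positivity
  have hb : 0 < y + b ^ 2 := by positivity
  have hdiff : y * a / (y + a ^ 2) - y * b / (y + b ^ 2)
      = y * (a - b) * (y - a * b) / ((y + a ^ 2) * (y + b ^ 2)) := by
    field_simp; ring
  have hcross : y * |y - a * b| ≤ (y + a ^ 2) * (y + b ^ 2) := by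
    rcases abs_cases (y - a * b) with ⟨h, _⟩ | ⟨h, _⟩ <;> rw [h] <;>
      nlinarith [sq_nonneg (a + b), sq_nonneg (a - b), sq_nonneg (a * b)]
  rw [hdiff, abs_div, abs_of_pos (mul_pos ha hb), abs_mul, abs_mul, abs_of_pos hy,
    div_le_iff₀ (mul_pos ha hb)]
  linarith [mul_le_mul_of_nonneg_left hcross (abs_nonneg (a - b))]

lemma continuous_inv_max {x : ℝ} (hx : 0 < x) : Continuous fun y => (max x y)⁻¹ :=
  (continuous_const.max continuous_id).inv₀ fun _ => (lt_max_of_lt_left hx).ne'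

lemma integral_inv_max_le {ε Λ x : ℝ} (hε : 0 < ε) (hx : x ∈ Icc ε Λ) :
    ∫ y in ε..Λ, (max x y)⁻¹ ≤ 1 + log (Λ / ε) := by
  obtain ⟨hεx, hxΛ⟩ := hx
  have hx0 : 0 < x := hε.trans_le hεx
  have hΛ : 0 < Λ := hx0.trans_le hxΛ
  have hcont := continuous_inv_max hx0
  have hleft : ∫ y in ε..x, (max x y)⁻¹ = (x - ε) * x⁻¹ := by
    rw [integral_congr (g := fun _ => x⁻¹), intervalIntegral.integral_const, smul_eq_mul]
    intro y hy
    rw [uIcc_of_le hεx] at hy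
    simp only [max_eq_left hy.2]
  have hright : ∫ y in x..Λ, (max x y)⁻¹ = log (Λ / x) := by
    rw [integral_congr (g := fun y => y⁻¹), integral_inv]
    · rw [uIcc_of_le hxΛ]
      exact fun h0 => hx0.not_ge h0.1
    · intro y hy
      rw [uIcc_of_le hxΛ] at hy
      simp only [max_eq_right hy.1]
  rw [← integral_add_adjacent_intervals (hcont.intervalIntegrable _ _)
    (hcont.intervalIntegrable _ _), hleft, hright]
  refine add_le_add ?_ (log_le_log (div_pos hΛ hx0) (div_le_div_of_nonneg_left hΛ.le hε hεx))
  rw [← div_eq_mul_inv, div_le_one hx0]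
  linarith

lemma continuousOn_mul_div_add_sq {ε Λ : ℝ} (hε : 0 < ε) {u : ℝ → ℝ}
    (hu : ContinuousOn u (Icc ε Λ)) :
    ContinuousOn (fun y => y * u y / (y + u y ^ 2)) (Icc ε Λ) :=
  (continuousOn_id.mul hu).div (continuousOn_id.add (hu.pow 2)) fun y hy => by
    have : 0 < y := hε.trans_le hy.1
    positivity

lemma opA_eq {lam ε Λ : ℝ} (u : ℝ → ℝ) (x : ℝ) :
    opA lam ε Λ u x = lam / 4 * ∫ y in ε..Λ, (max x y)⁻¹ * (y * u y / (y + u y ^ 2)) := by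
  simp only [opA, add_add_abs_sub_eq_two_mul_max, one_div, mul_inv, mul_assoc,
    intervalIntegral.integral_const_mul]
  ring

lemma abs_opA_sub_opA_le {lam ε Λ M x : ℝ} {u v : ℝ → ℝ} (hlam : 0 ≤ lam) (hε : 0 < ε)
    (hu : ContinuousOn u (Icc ε Λ)) (hv : ContinuousOn v (Icc ε Λ))
    (huv : ∀ y ∈ Icc ε Λ, |u y - v y| ≤ M) (hx : x ∈ Icc ε Λ) :
    |opA lam ε Λ u x - opA lam ε Λ v x| ≤ lam / 4 * (1 + log (Λ / ε)) * M := by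
  have hεΛ : ε ≤ Λ := hx.1.trans hx.2
  have hx0 : 0 < x := hε.trans_le hx.1
  have hM : 0 ≤ M := (abs_nonneg _).trans (huv ε (left_mem_Icc.2 hεΛ))
  have hint : ∀ w : ℝ → ℝ, ContinuousOn w (Icc ε Λ) → IntervalIntegrable
      (fun y => (max x y)⁻¹ * (y * w y / (y + w y ^ 2))) volume ε Λ := fun w hw =>
    ContinuousOn.intervalIntegrable <| by
      rw [uIcc_of_le hεΛ]
      exact (continuous_inv_max hx0).continuousOn.mul (continuousOn_mul_div_add_sq hε hw)
  have hpointwise : ∀ y ∈ Ioc ε Λ,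
      ‖(max x y)⁻¹ * (y * u y / (y + u y ^ 2)) - (max x y)⁻¹ * (y * v y / (y + v y ^ 2))‖
        ≤ M * (max x y)⁻¹ := by
    intro y hy
    have hmax : 0 < (max x y)⁻¹ := inv_pos.2 (lt_max_of_lt_left hx0)
    rw [Real.norm_eq_abs, ← mul_sub, abs_mul, abs_of_pos hmax, mul_comm M]
    gcongr
    exact (abs_mul_div_add_sq_sub_le (hε.trans hy.1) _ _).trans (huv y (Ioc_subset_Icc_self hy))
  have hbound : IntervalIntegrable (fun y => M * (max x y)⁻¹) volume ε Λ :=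
    ((continuous_inv_max hx0).const_mul M).intervalIntegrable _ _
  rw [opA_eq, opA_eq, ← mul_sub, ← integral_sub (hint u hu) (hint v hv), abs_mul,
    abs_of_nonneg (by positivity)]
  calc lam / 4 * |∫ y in ε..Λ, _|
      ≤ lam / 4 * ∫ y in ε..Λ, M * (max x y)⁻¹ := by
        gcongr
        exact norm_integral_le_of_norm_le hεΛ (ae_of_all _ hpointwise) hbound
    _ ≤ lam / 4 * (M * (1 + log (Λ / ε))) := by
        rw [intervalIntegral.integral_const_mul]
        gcongr
        exact integral_inv_max_le hε hx
    _ = lam / 4 * (1 + log (Λ / ε)) * M := by ring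

theorem stmt_7_general (ε Λ lam : ℝ) (hε : 0 < ε) (hεΛ : ε < Λ) (hlam : 2 < lam)
    (u v : ℝ → ℝ) (hu : memV lam ε Λ u) (hv : memV lam ε Λ v) :
    sSup ((fun x => |opA lam ε Λ u x - opA lam ε Λ v x|) '' Set.Icc ε Λ) ≤
      (lam / 4) * (1 + Real.log (Λ / ε)) *
        sSup ((fun x => |u x - v x|) '' Set.Icc ε Λ) := by
  have hbdd : BddAbove ((fun x => |u x - v x|) '' Icc ε Λ) :=
    (isCompact_Icc.image_of_continuousOn (hu.1.sub hv.1).abs).bddAbove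
  have huv : ∀ y ∈ Icc ε Λ, |u y - v y| ≤ sSup ((fun x => |u x - v x|) '' Icc ε Λ) :=
    fun y hy => le_csSup hbdd (mem_image_of_mem _ hy)
  refine csSup_le ((nonempty_Icc.2 hεΛ.le).image _) ?_
  rintro _ ⟨x, hx, rfl⟩
  exact abs_opA_sub_opA_le (by linarith) hε hu.1 hv.1 huv hx

theorem stmt_7 (ε Λ lam : ℝ) (hε : 0 < ε) (hεΛ : ε < Λ) (hlam : 2 < lam)
    (hratio : ε / Λ ≤ min (1 / 16)
      (((Real.sqrt (lam ^ 2 + 128 * (lam - 2)) - lam) / 64) ^ 2))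
    (u v : ℝ → ℝ) (hu : memV lam ε Λ u) (hv : memV lam ε Λ v) :
    sSup ((fun x => |opA lam ε Λ u x - opA lam ε Λ v x|) '' Set.Icc ε Λ) ≤
      (lam / 4) * (1 + Real.log (Λ / ε)) *
        sSup ((fun x => |u x - v x|) '' Set.Icc ε Λ) :=
  stmt_7_general ε Λ lam hε hεΛ hlam u v hu hv
end

section
/- There exists a function u₀ ∈ V with Au₀ = u₀, i.e. u₀ is continuous on [ε,Λ], satisfies 0 < w(x) ≤ u₀(x) ≤ (λ/4)·√Λ for all x ∈ [ε,Λ], and satisfies the Maskawa–Nakajima equation u₀(x) = (λ/2)·∫_ε^Λ [1/(y + x + |y − x|)]·[y·u₀(y)/(y + u₀(y)²)] dy for all x ∈ [ε,Λ]. -/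
open Real Set MeasureTheory intervalIntegral

/-!
With `nonlin y t = y t / (y + t²)` and the positive kernel `kernel x y = 1 / (2 max x y)`,
`A u x = (λ/2) ∫ kernel x y * nonlin y (u y) dy`. In logarithmic coordinates `f = log u` the map
`f ↦ log (A (exp f))` is a contraction for the sup distance on the closed set `log V`:
`τ ↦ log (nonlin y (exp τ))` has derivative `(y - t²)/(y + t²)` at `t = exp τ`, of modulus
bounded by a constant `< 1` while `t` stays in `[w(Λ), λ√Λ/4]`, and taking the logarithm of a
positive linear image does not increase the sup distance of logarithms.

`A` maps `V` into itself. From above, `nonlin y t ≤ √y/2` and `kernel x y ≤ 1/(2y)` give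
`A u ≤ λ√Λ/4`. From below, `nonlin y` is unimodal and `w(y) · λ√Λ/4 ≤ y`, so on `V` it is at
least `nonlin y (w y) ≥ w(y)/(1 + 16 ε/Λ)`; as `w` is a multiple of `y^(-1/2)` and
`∫ kernel x y * y^(-1/2) dy ≥ (1 - √(ε/Λ)) x^(-1/2)`, `A` multiplies this lower barrier by at
least `λ (1 - √(ε/Λ)) / (2 (1 + 16 ε/Λ))`, which the hypothesis on `ε/Λ` makes `≥ 1`.
Banach's fixed point theorem then gives the solution.
-/

lemma exists_fixedPoint_of_mapsTo {X : Type*} [MetricSpace X] [CompleteSpace X] {S : Set X}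
    {T : X → X} {K : ℝ} (hS : IsClosed S) (hne : S.Nonempty) (hT : MapsTo T S S) (hK : K < 1)
    (hlip : ∀ x ∈ S, ∀ y ∈ S, dist (T x) (T y) ≤ K * dist x y) : ∃ x ∈ S, T x = x := by
  obtain ⟨x, hx⟩ := hne
  obtain ⟨y, hy, hfix, -⟩ := ContractingWith.exists_fixedPoint' hS.isComplete hT
    ⟨Real.toNNReal_lt_one.2 hK, (LipschitzOnWith.of_dist_le' hlip).mapsToRestrict hT⟩ hx
    (edist_ne_top _ _)
  exact ⟨y, hy, hfix⟩

namespace MaskawaNakajima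

noncomputable def nonlin (y t : ℝ) : ℝ := y * t / (y + t ^ 2)

noncomputable def kernel (x y : ℝ) : ℝ := 1 / (y + x + |y - x|)

lemma opA_eq (lam ε Λ : ℝ) (u : ℝ → ℝ) (x : ℝ) :
    opA lam ε Λ u x = lam / 2 * ∫ y in ε..Λ, kernel x y * nonlin y (u y) := rfl

section Nonlinearity

variable {y t : ℝ}

lemma nonlin_pos (hy : 0 < y) (ht : 0 < t) : 0 < nonlin y t := by
  unfold nonlin; positivity

lemma nonlin_nonneg (hy : 0 < y) (ht : 0 ≤ t) : 0 ≤ nonlin y t := by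
  unfold nonlin; positivity

lemma nonlin_le_nonlin_of_mul_le {a b : ℝ} (hy : 0 < y) (hab : a ≤ b)
    (h : a * b ≤ y) : nonlin y a ≤ nonlin y b := by
  unfold nonlin
  rw [div_le_div_iff₀ (by positivity) (by positivity)]
  nlinarith [mul_nonneg (mul_nonneg hy.le (sub_nonneg.2 hab)) (sub_nonneg.2 h)]

lemma nonlin_le_nonlin_of_le_mul {a b : ℝ} (hy : 0 < y) (hab : a ≤ b)
    (h : y ≤ a * b) : nonlin y b ≤ nonlin y a := by
  unfold nonlin
  rw [div_le_div_iff₀ (by positivity) (by positivity)]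
  nlinarith [mul_nonneg (mul_nonneg hy.le (sub_nonneg.2 hab)) (sub_nonneg.2 h)]

/-- `nonlin y` increases up to `√y` and decreases after it, so on `[a, b]` with `a b ≤ y` its
minimum is at `a`. -/
lemma nonlin_le_nonlin_of_mem_Icc {a b : ℝ} (hy : 0 < y) (ha : 0 ≤ a) (ht : t ∈ Icc a b)
    (hab : a * b ≤ y) : nonlin y a ≤ nonlin y t := by
  rcases le_total (a * t) y with hat | hat
  · exact nonlin_le_nonlin_of_mul_le hy ht.1 hat
  · calc nonlin y a ≤ nonlin y b := nonlin_le_nonlin_of_mul_le hy (ht.1.trans ht.2) hab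
      _ ≤ nonlin y t :=
        nonlin_le_nonlin_of_le_mul hy ht.2 (hat.trans (by nlinarith [ht.1, ht.2]))

lemma nonlin_le_sqrt_div_two (hy : 0 < y) : nonlin y t ≤ √y / 2 := by
  obtain ⟨s, hs, rfl⟩ : ∃ s, 0 ≤ s ∧ y = s ^ 2 := ⟨√y, sqrt_nonneg y, (sq_sqrt hy.le).symm⟩
  unfold nonlin
  rw [sqrt_sq hs, div_le_div_iff₀ (by positivity) two_pos]
  nlinarith [mul_nonneg hs (sq_nonneg (s - t))]

lemma div_one_add_le_nonlin {δ : ℝ} (hy : 0 < y) (ht : 0 ≤ t) (hδ : 0 ≤ δ)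
    (htδ : t ^ 2 ≤ δ * y) : t / (1 + δ) ≤ nonlin y t := by
  unfold nonlin
  rw [div_le_div_iff₀ (by positivity) (by positivity)]
  nlinarith [mul_le_mul_of_nonneg_left htδ ht]

lemma abs_sub_div_add_le {ε Λ μ N s : ℝ} (hε : 0 < ε) (hμ : 0 < μ) (hy : y ∈ Icc ε Λ)
    (hs : s ∈ Icc μ N) : |(y - s) / (y + s)| ≤ 1 - 2 * min ε μ / (Λ + N) := by
  obtain ⟨hy₁, hy₂⟩ := hy
  obtain ⟨hs₁, hs₂⟩ := hs
  have hys : 0 < y + s := by linarith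
  calc |(y - s) / (y + s)| ≤ 1 - 2 * min ε μ / (y + s) := by
        rw [abs_div, abs_of_pos hys, le_sub_iff_add_le, ← add_div, div_le_one hys]
        cases abs_cases (y - s) <;> linarith [min_le_left ε μ, min_le_right ε μ]
    _ ≤ 1 - 2 * min ε μ / (Λ + N) := by gcongr

/-- In logarithmic coordinates `nonlin y` has derivative `(y - t²)/(y + t²)`. -/
lemma abs_log_nonlin_sub_log_nonlin_le {ε Λ m M a b : ℝ} (hε : 0 < ε) (hm : 0 < m)
    (hy : y ∈ Icc ε Λ) (ha : a ∈ Icc m M) (hb : b ∈ Icc m M) :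
    |log (nonlin y a) - log (nonlin y b)| ≤
      (1 - 2 * min ε (m ^ 2) / (Λ + M ^ 2)) * |log a - log b| := by
  have hy₀ : 0 < y := hε.trans_le hy.1
  set φ : ℝ → ℝ := fun τ => log y + τ - log (y + exp τ ^ 2)
  have hφ : ∀ {t}, 0 < t → φ (log t) = log (nonlin y t) := fun ht => by
    simp only [φ, nonlin, exp_log ht]
    rw [log_div (by positivity) (by positivity), log_mul hy₀.ne' ht.ne']
  have hderiv : ∀ τ ∈ Icc (log m) (log M),
      HasDerivWithinAt φ ((y - exp τ ^ 2) / (y + exp τ ^ 2)) (Icc (log m) (log M)) τ := by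
    intro τ _
    have hsq : HasDerivAt (fun τ => exp τ ^ 2) (2 * exp τ ^ 2) τ :=
      ((hasDerivAt_exp τ).fun_pow 2).congr_deriv (by norm_num; ring)
    have hsum : HasDerivAt (fun τ => log y + τ) 1 τ := (hasDerivAt_id' τ).const_add _
    refine (hsum.sub ((hsq.const_add y).log (by positivity))).hasDerivWithinAt.congr_deriv ?_
    field_simp
    ring
  have hbound : ∀ τ ∈ Icc (log m) (log M),
      ‖(y - exp τ ^ 2) / (y + exp τ ^ 2)‖ ≤ 1 - 2 * min ε (m ^ 2) / (Λ + M ^ 2) := by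
    intro τ hτ
    have hm' : m ≤ exp τ := by simpa [exp_log hm] using exp_le_exp.2 hτ.1
    have hM' : exp τ ≤ M := by
      simpa [exp_log (hm.trans_le (ha.1.trans ha.2))] using exp_le_exp.2 hτ.2
    exact abs_sub_div_add_le hε (pow_pos hm 2) hy
      ⟨pow_le_pow_left₀ hm.le hm' 2, pow_le_pow_left₀ (exp_pos τ).le hM' 2⟩
  have hlog : ∀ {t}, t ∈ Icc m M → log t ∈ Icc (log m) (log M) := fun ht =>
    ⟨log_le_log hm ht.1, log_le_log (hm.trans_le ht.1) ht.2⟩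
  have := (convex_Icc (log m) (log M)).norm_image_sub_le_of_norm_hasDerivWithin_le hderiv
    hbound (hlog hb) (hlog ha)
  rwa [hφ (hm.trans_le ha.1), hφ (hm.trans_le hb.1), Real.norm_eq_abs, Real.norm_eq_abs] at this

end Nonlinearity

section Kernel

variable {x y : ℝ}

lemma kernel_eq (x y : ℝ) : kernel x y = (2 * max x y)⁻¹ := by
  rw [kernel, one_div]
  congr 1
  rcases le_total x y with h | h
  · rw [max_eq_right h, abs_of_nonneg (sub_nonneg.2 h)]; ring
  · rw [max_eq_left h, abs_of_nonpos (sub_nonpos.2 h)]; ring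

lemma kernel_of_le (h : x ≤ y) : kernel x y = (2 * y)⁻¹ := by
  rw [kernel_eq, max_eq_right h]

lemma kernel_of_ge (h : y ≤ x) : kernel x y = (2 * x)⁻¹ := by
  rw [kernel_eq, max_eq_left h]

lemma kernel_pos (hy : 0 < y) : 0 < kernel x y := by
  rw [kernel_eq]
  have := hy.trans_le (le_max_right x y)
  positivity

lemma kernel_le (hy : 0 < y) : kernel x y ≤ (2 * y)⁻¹ := by
  rw [kernel_eq]
  gcongr
  exact le_max_right x y

lemma continuousOn_kernel {a b : ℝ} (ha : 0 < a) (x : ℝ) : ContinuousOn (kernel x) (Icc a b) := by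
  simp_rw [funext (kernel_eq x)]
  exact (continuous_const.mul (continuous_const.max continuous_id)).continuousOn.inv₀ fun y hy =>
    (mul_pos two_pos (ha.trans_le (hy.1.trans (le_max_right x y)))).ne'

lemma continuousOn_inv_sqrt {a b : ℝ} (ha : 0 < a) : ContinuousOn (fun y => (√y)⁻¹) (Icc a b) :=
  continuous_sqrt.continuousOn.inv₀ fun _ hy => (sqrt_pos.2 (ha.trans_le hy.1)).ne'

lemma intervalIntegrable_kernel_mul {a b : ℝ} {f : ℝ → ℝ} (ha : 0 < a) (hab : a ≤ b)
    (hf : ContinuousOn f (Icc a b)) (x : ℝ) :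
    IntervalIntegrable (fun y => kernel x y * f y) volume a b :=
  ((continuousOn_kernel ha x).mul hf).intervalIntegrable_of_Icc hab

lemma continuous_integral_kernel_mul {a b : ℝ} {f : ℝ → ℝ} (ha : 0 < a) (hab : a ≤ b)
    (hf : ContinuousOn f (Icc a b)) :
    Continuous fun x => ∫ y in a..b, kernel x y * f y := by
  set p : ℝ → ℝ := fun y => projIcc a b hab y
  have hp : Continuous p := continuous_subtype_val.comp continuous_projIcc
  have hpa : ∀ y, a ≤ p y := fun y => (projIcc a b hab y).2.1
  have hcont : Continuous fun q : ℝ × ℝ => kernel q.1 (p q.2) * f (p q.2) := by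
    simp_rw [kernel_eq]
    refine ((continuous_const.mul (continuous_fst.max (hp.comp continuous_snd))).inv₀
      fun q => ?_).mul ((hf.comp_continuous hp fun y => (projIcc a b hab y).2).comp
      continuous_snd)
    exact (mul_pos two_pos (ha.trans_le ((hpa q.2).trans (le_max_right q.1 (p q.2))))).ne'
  refine (intervalIntegral.continuous_parametric_intervalIntegral_of_continuous'
    (μ := volume) (f := fun x y => kernel x (p y) * f (p y)) hcont a b).congr fun x => ?_
  refine intervalIntegral.integral_congr fun y hy => ?_
  rw [uIcc_of_le hab] at hy
  simp only [p, projIcc_of_mem hab hy]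

lemma integral_inv_sqrt {a b : ℝ} (ha : 0 < a) (hab : a ≤ b) :
    ∫ y in a..b, (√y)⁻¹ = 2 * √b - 2 * √a := by
  refine intervalIntegral.integral_eq_sub_of_hasDerivAt (f := fun y => 2 * √y)
    (fun y hy => ?_) ((continuousOn_inv_sqrt ha).intervalIntegrable_of_Icc hab)
  rw [uIcc_of_le hab] at hy
  have hy₀ : 0 < y := ha.trans_le hy.1
  refine ((hasDerivAt_sqrt hy₀.ne').const_mul 2).congr_deriv ?_
  have := sqrt_pos.2 hy₀
  field_simp

lemma integral_inv_mul_sqrt {a b : ℝ} (ha : 0 < a) (hab : a ≤ b) :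
    ∫ y in a..b, (y * √y)⁻¹ = 2 * (√a)⁻¹ - 2 * (√b)⁻¹ := by
  have hpos : ∀ y ∈ Icc a b, 0 < y ∧ 0 < √y := fun y hy =>
    ⟨ha.trans_le hy.1, sqrt_pos.2 (ha.trans_le hy.1)⟩
  have hint : IntervalIntegrable (fun y => (y * √y)⁻¹) volume a b :=
    (continuousOn_id.mul continuous_sqrt.continuousOn).inv₀ (fun y hy =>
      (mul_pos (hpos y hy).1 (hpos y hy).2).ne') |>.intervalIntegrable_of_Icc hab
  have hderiv : ∀ y ∈ uIcc a b, HasDerivAt (fun y => -2 * (√y)⁻¹) (y * √y)⁻¹ y := by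
    intro y hy
    rw [uIcc_of_le hab] at hy
    obtain ⟨hy₀, hs⟩ := hpos y hy
    refine (((hasDerivAt_sqrt hy₀.ne').inv hs.ne').const_mul (-2)).congr_deriv ?_
    field_simp
    rw [sq_sqrt hy₀.le]
  rw [intervalIntegral.integral_eq_sub_of_hasDerivAt hderiv hint]
  ring

lemma integral_kernel_mul_inv_sqrt {ε Λ : ℝ} (hε : 0 < ε) (hx : x ∈ Icc ε Λ) :
    ∫ y in ε..Λ, kernel x y * (√y)⁻¹ = (√x - √ε) / x + ((√x)⁻¹ - (√Λ)⁻¹) := by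
  obtain ⟨hεx, hxΛ⟩ := hx
  have hx₀ : 0 < x := hε.trans_le hεx
  rw [← intervalIntegral.integral_add_adjacent_intervals
    (intervalIntegrable_kernel_mul hε hεx (continuousOn_inv_sqrt hε) x)
    (intervalIntegrable_kernel_mul hx₀ hxΛ (continuousOn_inv_sqrt hx₀) x)]
  have hleft : EqOn (fun y => kernel x y * (√y)⁻¹) (fun y => (2 * x)⁻¹ * (√y)⁻¹) (uIcc ε x) :=
    fun y hy => by rw [uIcc_of_le hεx] at hy; dsimp only; rw [kernel_of_ge hy.2]
  have hright : EqOn (fun y => kernel x y * (√y)⁻¹) (fun y => 2⁻¹ * (y * √y)⁻¹) (uIcc x Λ) :=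
    fun y hy => by
      rw [uIcc_of_le hxΛ] at hy
      dsimp only
      rw [kernel_of_le hy.1, mul_inv, mul_inv]
      ring
  rw [intervalIntegral.integral_congr hleft, intervalIntegral.integral_congr hright,
    intervalIntegral.integral_const_mul, intervalIntegral.integral_const_mul,
    integral_inv_sqrt hε hεx, integral_inv_mul_sqrt hx₀ hxΛ]
  field_simp

lemma mul_inv_sqrt_le_integral_kernel_mul_inv_sqrt {ε Λ : ℝ} (hε : 0 < ε) (hx : x ∈ Icc ε Λ) :
    (1 - √(ε / Λ)) * (√x)⁻¹ ≤ ∫ y in ε..Λ, kernel x y * (√y)⁻¹ := by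
  rw [integral_kernel_mul_inv_sqrt hε hx, sqrt_div hε.le]
  have hx₀ : 0 < x := hε.trans_le hx.1
  have hs₁ : √ε ≤ √x := sqrt_le_sqrt hx.1
  have hs₂ : √x ≤ √Λ := sqrt_le_sqrt hx.2
  have hsx : 0 < √x := sqrt_pos.2 hx₀
  have hsΛ : 0 < √Λ := hsx.trans_le hs₂
  set s := √x
  rw [show x = s ^ 2 from (sq_sqrt hx₀.le).symm]
  field_simp
  nlinarith [mul_nonneg (sub_nonneg.2 hs₁) (sub_nonneg.2 hs₂)]

end Kernel

section Barrier

variable {lam ε Λ x y : ℝ}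

lemma wfun_eq_mul_inv_sqrt (hy : 0 ≤ y) : wfun lam ε Λ y = 4 * ε / lam * √(ε / Λ) * (√y)⁻¹ := by
  rw [wfun, ← div_div, sqrt_div' _ hy]
  ring

lemma wfun_pos (hlam : 0 < lam) (hε : 0 < ε) (hΛ : 0 < Λ) (hy : 0 < y) : 0 < wfun lam ε Λ y := by
  rw [wfun_eq_mul_inv_sqrt hy.le]
  have := sqrt_pos.2 (div_pos hε hΛ)
  have := sqrt_pos.2 hy
  positivity

lemma wfun_le_wfun_of_le (hlam : 0 < lam) (hε : 0 < ε) (hx : 0 < x) (hxy : x ≤ y) :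
    wfun lam ε Λ y ≤ wfun lam ε Λ x := by
  rw [wfun_eq_mul_inv_sqrt hx.le, wfun_eq_mul_inv_sqrt (hx.le.trans hxy)]
  have := sqrt_pos.2 hx
  gcongr

lemma wfun_mul_le (hlam : 0 < lam) (hε : 0 < ε) (hΛ : 0 < Λ) (hy : ε ≤ y) :
    wfun lam ε Λ y * (lam / 4 * √Λ) ≤ y := by
  have hy₀ : 0 < y := hε.trans_le hy
  have hsy : 0 < √y := sqrt_pos.2 hy₀
  have hsε : √ε ≤ √y := sqrt_le_sqrt hy
  rw [wfun_eq_mul_inv_sqrt hy₀.le, sqrt_div hε.le]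
  field_simp
  nlinarith [mul_le_mul hy hsε (sqrt_nonneg ε) hy₀.le]

lemma wfun_le (hlam : 0 < lam) (hε : 0 < ε) (hΛ : 0 < Λ) (h : 16 * (ε / Λ) ≤ lam ^ 2)
    (hy : ε ≤ y) : wfun lam ε Λ y ≤ lam / 4 * √Λ := by
  have hy₀ : 0 < y := hε.trans_le hy
  have hsε : 0 < √ε := sqrt_pos.2 hε
  have hsy : √ε ≤ √y := sqrt_le_sqrt hy
  have hsΛ : 0 < √Λ := sqrt_pos.2 hΛ
  rw [wfun_eq_mul_inv_sqrt hy₀.le, sqrt_div hε.le]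
  rw [← mul_div_assoc, div_le_iff₀ hΛ] at h
  field_simp
  rw [sq_sqrt hΛ.le]
  nlinarith [mul_le_mul h hsy hsε.le (by positivity)]

lemma wfun_sq_le (hlam : 1 ≤ lam) (hε : 0 < ε) (hΛ : 0 < Λ) (hy : ε ≤ y) :
    wfun lam ε Λ y ^ 2 ≤ 16 * (ε / Λ) * y := by
  have hy₀ : 0 < y := hε.trans_le hy
  rw [wfun, mul_pow, sq_sqrt (by positivity)]
  field_simp
  have h₁ : ε ^ 2 ≤ y ^ 2 := pow_le_pow_left₀ hε.le hy 2
  have h₂ : y ^ 2 ≤ lam ^ 2 * y ^ 2 := le_mul_of_one_le_left (sq_nonneg y) (one_le_pow₀ hlam)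
  nlinarith

end Barrier

section Operator

variable {lam ε Λ : ℝ} {u v : ℝ → ℝ}

lemma abs_log_sub_log_le_iff {a b t : ℝ} (ha : 0 < a) (hb : 0 < b) :
    |log a - log b| ≤ t ↔ a ≤ exp t * b ∧ b ≤ exp t * a := by
  rw [abs_sub_le_iff, sub_le_iff_le_add, sub_le_iff_le_add,
    ← log_le_log_iff ha (by positivity), ← log_le_log_iff hb (by positivity),
    log_mul (exp_pos t).ne' hb.ne', log_mul (exp_pos t).ne' ha.ne', log_exp]

lemma continuousOn_nonlin_comp (hε : 0 < ε) (hu : ContinuousOn u (Icc ε Λ)) :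
    ContinuousOn (fun y => nonlin y (u y)) (Icc ε Λ) :=
  (continuousOn_id.mul hu).div (continuousOn_id.add (hu.pow 2)) fun y hy =>
    (add_pos_of_pos_of_nonneg (hε.trans_le hy.1) (sq_nonneg (u y))).ne'

lemma continuous_opA (hε : 0 < ε) (hεΛ : ε ≤ Λ) (hu : ContinuousOn u (Icc ε Λ)) :
    Continuous (opA lam ε Λ u) :=
  continuous_const.mul (continuous_integral_kernel_mul hε hεΛ (continuousOn_nonlin_comp hε hu))

lemma opA_pos (hlam : 0 < lam) (hε : 0 < ε) (hεΛ : ε < Λ) (hu : ContinuousOn u (Icc ε Λ))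
    (hu₀ : ∀ y ∈ Icc ε Λ, 0 < u y) (x : ℝ) : 0 < opA lam ε Λ u x := by
  refine mul_pos (half_pos hlam) (intervalIntegral.intervalIntegral_pos_of_pos_on
    (intervalIntegrable_kernel_mul hε hεΛ.le (continuousOn_nonlin_comp hε hu) x)
    (fun y hy => ?_) hεΛ)
  have hy₀ : 0 < y := hε.trans hy.1
  exact mul_pos (kernel_pos hy₀) (nonlin_pos hy₀ (hu₀ y (Ioo_subset_Icc_self hy)))

lemma opA_le_mul_opA (hlam : 0 ≤ lam) (hε : 0 < ε) (hεΛ : ε ≤ Λ)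
    (hu : ContinuousOn u (Icc ε Λ)) (hv : ContinuousOn v (Icc ε Λ)) {c : ℝ}
    (h : ∀ y ∈ Icc ε Λ, nonlin y (u y) ≤ c * nonlin y (v y)) (x : ℝ) :
    opA lam ε Λ u x ≤ c * opA lam ε Λ v x := by
  have hint := intervalIntegral.integral_mono_on hεΛ
    (intervalIntegrable_kernel_mul hε hεΛ (continuousOn_nonlin_comp hε hu) x)
    ((intervalIntegrable_kernel_mul hε hεΛ (continuousOn_nonlin_comp hε hv) x).const_mul c)
    fun y hy => by
      rw [mul_left_comm]
      exact mul_le_mul_of_nonneg_left (h y hy) (kernel_pos (hε.trans_le hy.1)).le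
  rw [intervalIntegral.integral_const_mul] at hint
  rw [opA_eq, opA_eq, mul_left_comm]
  exact mul_le_mul_of_nonneg_left hint (by positivity)

lemma abs_log_opA_sub_log_opA_le (hlam : 0 < lam) (hε : 0 < ε) (hεΛ : ε < Λ)
    (hu : ContinuousOn u (Icc ε Λ)) (hv : ContinuousOn v (Icc ε Λ))
    (hu₀ : ∀ y ∈ Icc ε Λ, 0 < u y) (hv₀ : ∀ y ∈ Icc ε Λ, 0 < v y) {t : ℝ}
    (h : ∀ y ∈ Icc ε Λ, |log (nonlin y (u y)) - log (nonlin y (v y))| ≤ t) (x : ℝ) :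
    |log (opA lam ε Λ u x) - log (opA lam ε Λ v x)| ≤ t := by
  have hpos : ∀ y ∈ Icc ε Λ, ∀ {w : ℝ → ℝ}, (∀ y ∈ Icc ε Λ, 0 < w y) → 0 < nonlin y (w y) :=
    fun y hy w hw => nonlin_pos (hε.trans_le hy.1) (hw y hy)
  have h' := fun y hy => (abs_log_sub_log_le_iff (hpos y hy hu₀) (hpos y hy hv₀)).1 (h y hy)
  rw [abs_log_sub_log_le_iff (opA_pos hlam hε hεΛ hu hu₀ x) (opA_pos hlam hε hεΛ hv hv₀ x)]
  exact ⟨opA_le_mul_opA hlam.le hε hεΛ.le hu hv (fun y hy => (h' y hy).1) x,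
    opA_le_mul_opA hlam.le hε hεΛ.le hv hu (fun y hy => (h' y hy).2) x⟩

lemma opA_le (hlam : 0 ≤ lam) (hε : 0 < ε) (hεΛ : ε ≤ Λ) (hu : ContinuousOn u (Icc ε Λ))
    (hu₀ : ∀ y ∈ Icc ε Λ, 0 ≤ u y) (x : ℝ) : opA lam ε Λ u x ≤ lam / 4 * √Λ := by
  have hbound : ∀ y ∈ Icc ε Λ, kernel x y * nonlin y (u y) ≤ 4⁻¹ * (√y)⁻¹ := by
    intro y hy
    have hy₀ : 0 < y := hε.trans_le hy.1
    have hsy : 0 < √y := sqrt_pos.2 hy₀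
    calc kernel x y * nonlin y (u y) ≤ (2 * y)⁻¹ * (√y / 2) :=
          mul_le_mul (kernel_le hy₀) (nonlin_le_sqrt_div_two hy₀)
            (nonlin_nonneg hy₀ (hu₀ y hy)) (by positivity)
      _ = 4⁻¹ * (√y)⁻¹ := by
          field_simp
          rw [sq_sqrt hy₀.le]
          ring
  have hint := intervalIntegral.integral_mono_on hεΛ
    (intervalIntegrable_kernel_mul hε hεΛ (continuousOn_nonlin_comp hε hu) x)
    (((continuousOn_inv_sqrt hε).intervalIntegrable_of_Icc hεΛ).const_mul 4⁻¹) hbound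
  rw [intervalIntegral.integral_const_mul, integral_inv_sqrt hε hεΛ] at hint
  rw [opA_eq]
  have := sqrt_nonneg ε
  nlinarith [mul_le_mul_of_nonneg_left hint (by positivity : 0 ≤ lam / 2)]

lemma wfun_le_opA (hlam : 0 < lam) (hε : 0 < ε) (hεΛ : ε ≤ Λ)
    (hkey : 2 * (1 + 16 * (ε / Λ)) ≤ lam * (1 - √(ε / Λ))) (hu : memV lam ε Λ u) {x : ℝ}
    (hx : x ∈ Icc ε Λ) : wfun lam ε Λ x ≤ opA lam ε Λ u x := by
  have hΛ : 0 < Λ := hε.trans_le hεΛ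
  have hq : 0 ≤ √(ε / Λ) := sqrt_nonneg _
  have hδ : 0 ≤ 16 * (ε / Λ) := by positivity
  have hlam₁ : 1 ≤ lam := by nlinarith
  set c := 1 + 16 * (ε / Λ)
  set a := 4 * ε / lam * √(ε / Λ)
  have hpt : ∀ y ∈ Icc ε Λ, kernel x y * (a / c * (√y)⁻¹) ≤ kernel x y * nonlin y (u y) := by
    intro y hy
    have hy₀ : 0 < y := hε.trans_le hy.1
    have hw₀ : 0 ≤ wfun lam ε Λ y := (wfun_pos hlam hε hΛ hy₀).le
    refine mul_le_mul_of_nonneg_left ?_ (kernel_pos hy₀).le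
    calc a / c * (√y)⁻¹ = wfun lam ε Λ y / c := by rw [wfun_eq_mul_inv_sqrt hy₀.le]; ring
      _ ≤ nonlin y (wfun lam ε Λ y) :=
          div_one_add_le_nonlin hy₀ hw₀ hδ (wfun_sq_le hlam₁ hε hΛ hy.1)
      _ ≤ nonlin y (u y) :=
          nonlin_le_nonlin_of_mem_Icc hy₀ hw₀ (hu.2 y hy) (wfun_mul_le hlam hε hΛ hy.1)
  have hmono := intervalIntegral.integral_mono_on hεΛ (intervalIntegrable_kernel_mul hε hεΛ
    (f := fun y => a / c * (√y)⁻¹) (continuousOn_const.mul (continuousOn_inv_sqrt hε)) x)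
    (intervalIntegrable_kernel_mul hε hεΛ (continuousOn_nonlin_comp hε hu.1) x) hpt
  have hx₀ : 0 < x := hε.trans_le hx.1
  have hsx : 0 < √x := sqrt_pos.2 hx₀
  have ha : 0 < a := by have := sqrt_pos.2 (div_pos hε hΛ); positivity
  calc wfun lam ε Λ x = a * (√x)⁻¹ := wfun_eq_mul_inv_sqrt hx₀.le
    _ ≤ a * (√x)⁻¹ * (lam * (1 - √(ε / Λ)) / (2 * c)) :=
        le_mul_of_one_le_right (by positivity) ((one_le_div (by positivity)).2 hkey)
    _ = lam / 2 * (a / c) * ((1 - √(ε / Λ)) * (√x)⁻¹) := by field_simp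
    _ ≤ lam / 2 * (a / c) * ∫ y in ε..Λ, kernel x y * (√y)⁻¹ := by
        gcongr
        exact mul_inv_sqrt_le_integral_kernel_mul_inv_sqrt hε hx
    _ = lam / 2 * ∫ y in ε..Λ, kernel x y * (a / c * (√y)⁻¹) := by
        rw [mul_assoc, ← intervalIntegral.integral_const_mul]
        congr 2 with y
        ring
    _ ≤ opA lam ε Λ u x := by
        rw [opA_eq]
        gcongr

end Operator

section FixedPoint

variable {lam ε Λ : ℝ}

/-- `exp ∘ f`, extended constantly outside `[ε, Λ]` so that `opA` can be applied to it. -/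
noncomputable def expExtend (hεΛ : ε ≤ Λ) (f : C(Icc ε Λ, ℝ)) (t : ℝ) : ℝ :=
  exp (f (projIcc ε Λ hεΛ t))

lemma continuous_expExtend (hεΛ : ε ≤ Λ) (f : C(Icc ε Λ, ℝ)) : Continuous (expExtend hεΛ f) :=
  continuous_exp.comp (f.continuous.comp continuous_projIcc)

lemma expExtend_of_mem (hεΛ : ε ≤ Λ) (f : C(Icc ε Λ, ℝ)) {t : ℝ} (ht : t ∈ Icc ε Λ) :
    expExtend hεΛ f t = exp (f ⟨t, ht⟩) := by
  rw [expExtend, projIcc_of_mem hεΛ ht]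

def logV (lam ε Λ : ℝ) : Set C(Icc ε Λ, ℝ) :=
  {f | ∀ z : Icc ε Λ, log (wfun lam ε Λ z) ≤ f z ∧ f z ≤ log (lam / 4 * √Λ)}

lemma isClosed_logV : IsClosed (logV lam ε Λ) := by
  simp only [logV, ofPred_forall, ofPred_and]
  exact isClosed_iInter fun z => (isClosed_le continuous_const (continuous_eval_const z)).inter
    (isClosed_le (continuous_eval_const z) continuous_const)

lemma memV_expExtend (hlam : 0 < lam) (hε : 0 < ε) (hεΛ : ε ≤ Λ) {f : C(Icc ε Λ, ℝ)}
    (hf : f ∈ logV lam ε Λ) : memV lam ε Λ (expExtend hεΛ f) := by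
  refine ⟨(continuous_expExtend hεΛ f).continuousOn, fun y hy => ?_⟩
  have hΛ : 0 < Λ := hε.trans_le hεΛ
  rw [expExtend_of_mem hεΛ f hy]
  obtain ⟨hlow, hup⟩ := hf ⟨y, hy⟩
  have := sqrt_pos.2 hΛ
  exact ⟨(log_le_iff_le_exp (wfun_pos hlam hε hΛ (hε.trans_le hy.1))).1 hlow,
    (le_log_iff_exp_le (by positivity)).1 hup⟩

noncomputable def logOpA (hlam : 0 < lam) (hε : 0 < ε) (hεΛ : ε < Λ) (f : C(Icc ε Λ, ℝ)) :
    C(Icc ε Λ, ℝ) where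
  toFun z := log (opA lam ε Λ (expExtend hεΛ.le f) z)
  continuous_toFun :=
    ((continuous_opA hε hεΛ.le (continuous_expExtend hεΛ.le f).continuousOn).comp
      continuous_subtype_val).log fun z =>
        (opA_pos hlam hε hεΛ (continuous_expExtend hεΛ.le f).continuousOn
          (fun _ _ => exp_pos _) z).ne'

lemma logOpA_apply (hlam : 0 < lam) (hε : 0 < ε) (hεΛ : ε < Λ) (f : C(Icc ε Λ, ℝ))
    (z : Icc ε Λ) : logOpA hlam hε hεΛ f z = log (opA lam ε Λ (expExtend hεΛ.le f) z) := rfl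

lemma sixteen_mul_le_sq_of_two_mul_le (hlam : 0 < lam)
    (hkey : 2 * (1 + 16 * (ε / Λ)) ≤ lam * (1 - √(ε / Λ))) : 16 * (ε / Λ) ≤ lam ^ 2 := by
  nlinarith [mul_nonneg hlam.le (sqrt_nonneg (ε / Λ)), sq_nonneg (lam - 1)]

lemma logV_nonempty (hlam : 0 < lam) (hε : 0 < ε) (hεΛ : ε ≤ Λ)
    (h16 : 16 * (ε / Λ) ≤ lam ^ 2) : (logV lam ε Λ).Nonempty := by
  have hΛ : 0 < Λ := hε.trans_le hεΛ
  exact ⟨.const _ (log (lam / 4 * √Λ)), fun z => ⟨log_le_log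
    (wfun_pos hlam hε hΛ (hε.trans_le z.2.1)) (wfun_le hlam hε hΛ h16 z.2.1), le_rfl⟩⟩

lemma mapsTo_logOpA (hlam : 0 < lam) (hε : 0 < ε) (hεΛ : ε < Λ)
    (hkey : 2 * (1 + 16 * (ε / Λ)) ≤ lam * (1 - √(ε / Λ))) :
    MapsTo (logOpA hlam hε hεΛ) (logV lam ε Λ) (logV lam ε Λ) := by
  intro f hf z
  have hu := memV_expExtend hlam hε hεΛ.le hf
  have hpos := opA_pos hlam hε hεΛ hu.1 (fun _ _ => exp_pos _) z
  rw [logOpA_apply]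
  exact ⟨log_le_log (wfun_pos hlam hε (hε.trans hεΛ) (hε.trans_le z.2.1))
      (wfun_le_opA hlam hε hεΛ.le hkey hu z.2),
    log_le_log hpos (opA_le hlam.le hε hεΛ.le hu.1 (fun _ _ => (exp_pos _).le) z)⟩

/-- The bound of `abs_sub_div_add_le` for `|(y - t²)/(y + t²)|` when `y ∈ [ε, Λ]` and `t` lies
in `[w(Λ), λ√Λ/4]`, which contains the values of every function in `V`. -/
noncomputable def contractionConst (lam ε Λ : ℝ) : ℝ :=
  1 - 2 * min ε (wfun lam ε Λ Λ ^ 2) / (Λ + (lam / 4 * √Λ) ^ 2)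

lemma contractionConst_nonneg (hlam : 0 < lam) (hε : 0 < ε) (hεΛ : ε ≤ Λ)
    (h16 : 16 * (ε / Λ) ≤ lam ^ 2) : 0 ≤ contractionConst lam ε Λ := by
  have hΛ : 0 < Λ := hε.trans_le hεΛ
  have hm := wfun_pos hlam hε hΛ hΛ
  have hmU : wfun lam ε Λ Λ ^ 2 ≤ (lam / 4 * √Λ) ^ 2 :=
    pow_le_pow_left₀ hm.le (wfun_le hlam hε hΛ h16 hεΛ) 2
  rw [contractionConst, sub_nonneg, div_le_one (by positivity)]
  linarith [min_le_left ε (wfun lam ε Λ Λ ^ 2), min_le_right ε (wfun lam ε Λ Λ ^ 2)]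

lemma contractionConst_lt_one (hlam : 0 < lam) (hε : 0 < ε) (hεΛ : ε ≤ Λ) :
    contractionConst lam ε Λ < 1 := by
  have hΛ : 0 < Λ := hε.trans_le hεΛ
  have := lt_min hε (pow_pos (wfun_pos hlam hε hΛ hΛ) 2)
  rw [contractionConst, sub_lt_self_iff]
  positivity

lemma dist_logOpA_le (hlam : 0 < lam) (hε : 0 < ε) (hεΛ : ε < Λ)
    (h16 : 16 * (ε / Λ) ≤ lam ^ 2) {f g : C(Icc ε Λ, ℝ)} (hf : f ∈ logV lam ε Λ)
    (hg : g ∈ logV lam ε Λ) :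
    dist (logOpA hlam hε hεΛ f) (logOpA hlam hε hεΛ g) ≤ contractionConst lam ε Λ * dist f g := by
  have hΛ : 0 < Λ := hε.trans hεΛ
  have hK := contractionConst_nonneg hlam hε hεΛ.le h16
  have hmem : ∀ {f}, f ∈ logV lam ε Λ → ∀ y ∈ Icc ε Λ,
      expExtend hεΛ.le f y ∈ Icc (wfun lam ε Λ Λ) (lam / 4 * √Λ) := fun hf y hy =>
    have hu := (memV_expExtend hlam hε hεΛ.le hf).2 y hy
    ⟨(wfun_le_wfun_of_le hlam hε (hε.trans_le hy.1) hy.2).trans hu.1, hu.2⟩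
  have hcont := fun f => (continuous_expExtend hεΛ.le f).continuousOn (s := Icc ε Λ)
  refine (ContinuousMap.dist_le (by positivity)).2 fun z => ?_
  rw [Real.dist_eq, logOpA_apply, logOpA_apply]
  refine abs_log_opA_sub_log_opA_le hlam hε hεΛ (hcont f) (hcont g) (fun _ _ => exp_pos _)
    (fun _ _ => exp_pos _) (fun y hy => ?_) z
  calc _ ≤ contractionConst lam ε Λ *
        |log (expExtend hεΛ.le f y) - log (expExtend hεΛ.le g y)| :=
        abs_log_nonlin_sub_log_nonlin_le hε (wfun_pos hlam hε hΛ hΛ) hy (hmem hf y hy)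
          (hmem hg y hy)
    _ ≤ contractionConst lam ε Λ * dist f g := by
        rw [expExtend_of_mem _ _ hy, expExtend_of_mem _ _ hy, log_exp, log_exp, ← Real.dist_eq]
        exact mul_le_mul_of_nonneg_left (ContinuousMap.dist_apply_le_dist _) hK

theorem exists_memV_fixedPoint (hlam : 0 < lam) (hε : 0 < ε) (hεΛ : ε < Λ)
    (hkey : 2 * (1 + 16 * (ε / Λ)) ≤ lam * (1 - √(ε / Λ))) :
    ∃ u, memV lam ε Λ u ∧ ∀ x ∈ Icc ε Λ, u x = opA lam ε Λ u x := by
  have h16 := sixteen_mul_le_sq_of_two_mul_le hlam hkey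
  obtain ⟨f, hf, hfix⟩ := exists_fixedPoint_of_mapsTo isClosed_logV
    (logV_nonempty hlam hε hεΛ.le h16) (mapsTo_logOpA hlam hε hεΛ hkey)
    (contractionConst_lt_one hlam hε hεΛ.le) fun f hf g hg => dist_logOpA_le hlam hε hεΛ h16 hf hg
  have hu := memV_expExtend hlam hε hεΛ.le hf
  refine ⟨expExtend hεΛ.le f, hu, fun x hx => ?_⟩
  have hx' : log (opA lam ε Λ (expExtend hεΛ.le f) x) = f ⟨x, hx⟩ :=
    congrArg (fun g : C(Icc ε Λ, ℝ) => g ⟨x, hx⟩) hfix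
  rw [expExtend_of_mem _ _ hx, ← hx', exp_log (opA_pos hlam hε hεΛ hu.1 (fun _ _ => exp_pos _) x)]

end FixedPoint

lemma two_mul_one_add_le_of_sq_le {lam q : ℝ} (hlam : 2 < lam) (hq : 0 ≤ q)
    (h : q ^ 2 ≤ ((√(lam ^ 2 + 128 * (lam - 2)) - lam) / 64) ^ 2) :
    2 * (1 + 16 * q ^ 2) ≤ lam * (1 - q) := by
  have hD : 0 ≤ lam ^ 2 + 128 * (lam - 2) := by nlinarith
  have hlamD : lam ≤ √(lam ^ 2 + 128 * (lam - 2)) :=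
    le_sqrt_of_sq_le (by nlinarith)
  have hqr := (pow_le_pow_iff_left₀ hq (by linarith) two_ne_zero).1 h
  have hsq : (64 * q + lam) ^ 2 ≤ lam ^ 2 + 128 * (lam - 2) := by
    rw [← sq_sqrt hD]
    exact pow_le_pow_left₀ (by linarith) (by linarith) 2
  nlinarith

end MaskawaNakajima

theorem stmt_9 (ε Λ lam : ℝ) (hε : 0 < ε) (hεΛ : ε < Λ) (hlam : 2 < lam)
    (hratio : ε / Λ ≤ min (1 / 16)
      (((Real.sqrt (lam ^ 2 + 128 * (lam - 2)) - lam) / 64) ^ 2)) :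
    ∃ u₀ : ℝ → ℝ, memV lam ε Λ u₀ ∧
      (∀ x ∈ Set.Icc ε Λ, 0 < wfun lam ε Λ x) ∧
      ∀ x ∈ Set.Icc ε Λ, u₀ x = opA lam ε Λ u₀ x := by
  have hΛ : 0 < Λ := hε.trans hεΛ
  have hq : √(ε / Λ) ^ 2 = ε / Λ := sq_sqrt (div_nonneg hε.le hΛ.le)
  have hkey := MaskawaNakajima.two_mul_one_add_le_of_sq_le hlam (sqrt_nonneg _)
    (hq.trans_le (hratio.trans (min_le_right _ _)))
  rw [hq] at hkey
  obtain ⟨u, hu, hfix⟩ := MaskawaNakajima.exists_memV_fixedPoint (by linarith) hε hεΛ hkey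
  exact ⟨u, hu, fun x hx => MaskawaNakajima.wfun_pos (by linarith) hε hΛ (hε.trans_le hx.1), hfix⟩
end

section
/- Let u₀ ∈ V be a fixed point of A (Au₀ = u₀) satisfying u₀(x) ≤ √x for all x ∈ [ε,Λ]. Then u₀ is the unique fixed point of A in V; that is, if v₀ ∈ V satisfies Av₀ = v₀, then v₀ = u₀. -/
open Real Set MeasureTheory intervalIntegral

/-!
Splitting the kernel at `y = x` (it equals `1 / (2 max x y)`) gives
`A u x = (λ/4) (x⁻¹ ∫_ε^x g + ∫_x^Λ g y / y)` with `g y = y u y / (y + u y²)`, so a fixed point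
solves the Sturm–Liouville problem `-(x² u')' = (λ/4) x u / (x + u²)` with `u'(ε) = 0` and
`Λ u'(Λ) + u(Λ) = 0`. The right-hand side is `k(x, u) u` with `k(x, ·)` strictly decreasing on
`(0, ∞)`, and such sublinear problems have at most one positive solution (Brezis–Oswald): for two
solutions `u, v` with fluxes `p = x² u'`, `q = x² v'`, the Picone function
`W = (u² - v²) (p/u - q/v)` vanishes at both ends and has nonnegative derivative
`(u² - v²) (k(x,v) - k(x,u)) + ((v p/u - q)² + (u q/v - p)²) / x²`. Hence `W ≡ 0`, so this
derivative vanishes, which forces `u = v`.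
-/

theorem StrictAntiOn.sq_sub_sq_mul_sub_pos {k : ℝ → ℝ} (hk : StrictAntiOn k (Ioi 0)) {s t : ℝ}
    (hs : 0 < s) (ht : 0 < t) (hst : s ≠ t) : 0 < (s ^ 2 - t ^ 2) * (k t - k s) := by
  rcases hst.lt_or_gt with h | h
  · have : k t < k s := hk hs ht h
    exact mul_pos_of_neg_of_neg (by nlinarith) (by linarith)
  · have : k s < k t := hk ht hs h
    exact mul_pos (by nlinarith) (by linarith)

theorem StrictAntiOn.sq_sub_sq_mul_sub_nonneg {k : ℝ → ℝ} (hk : StrictAntiOn k (Ioi 0))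
    {s t : ℝ} (hs : 0 < s) (ht : 0 < t) : 0 ≤ (s ^ 2 - t ^ 2) * (k t - k s) := by
  rcases eq_or_ne s t with rfl | hst
  · simp
  · exact (hk.sq_sub_sq_mul_sub_pos hs ht hst).le

theorem strictAntiOn_div_add_sq {c x : ℝ} (hc : 0 < c) (hx : 0 ≤ x) :
    StrictAntiOn (fun s ↦ c / (x + s ^ 2)) (Ioi 0) := fun s hs t _ hst ↦
  div_lt_div_of_pos_left hc (by nlinarith [mem_Ioi.1 hs]) (by nlinarith [mem_Ioi.1 hs])

theorem hasDerivWithinAt_picone {s : Set ℝ} {x r ku kv : ℝ} {u v p q : ℝ → ℝ}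
    (hu : HasDerivWithinAt u (p x / r) s x) (hv : HasDerivWithinAt v (q x / r) s x)
    (hp : HasDerivWithinAt p (-(ku * u x)) s x) (hq : HasDerivWithinAt q (-(kv * v x)) s x)
    (hux : u x ≠ 0) (hvx : v x ≠ 0) (hr : r ≠ 0) :
    HasDerivWithinAt (fun y ↦ (u y ^ 2 - v y ^ 2) * (p y / u y - q y / v y))
      ((u x ^ 2 - v x ^ 2) * (kv - ku) +
        ((v x * p x / u x - q x) ^ 2 + (u x * q x / v x - p x) ^ 2) / r) s x := by
  refine (((hu.pow 2).sub (hv.pow 2)).mul ((hp.div hu hux).sub (hq.div hv hvx))).congr_deriv ?_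
  simp only [Pi.sub_apply, Pi.div_apply, Pi.pow_apply]
  field_simp
  ring

theorem eqOn_of_sturmLiouville_sublinear {a b : ℝ} (hab : a < b) {r : ℝ → ℝ}
    {k : ℝ → ℝ → ℝ} {u v p q : ℝ → ℝ}
    (hr : ∀ x ∈ Icc a b, 0 < r x) (hk : ∀ x ∈ Icc a b, StrictAntiOn (k x) (Ioi 0))
    (hu_pos : ∀ x ∈ Icc a b, 0 < u x) (hv_pos : ∀ x ∈ Icc a b, 0 < v x)
    (hu : ∀ x ∈ Icc a b, HasDerivWithinAt u (p x / r x) (Icc a b) x)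
    (hv : ∀ x ∈ Icc a b, HasDerivWithinAt v (q x / r x) (Icc a b) x)
    (hp : ∀ x ∈ Icc a b, HasDerivWithinAt p (-(k x (u x) * u x)) (Icc a b) x)
    (hq : ∀ x ∈ Icc a b, HasDerivWithinAt q (-(k x (v x) * v x)) (Icc a b) x)
    (ha : p a / u a = q a / v a) (hb : p b / u b = q b / v b) :
    EqOn u v (Icc a b) := by
  set W : ℝ → ℝ := fun y ↦ (u y ^ 2 - v y ^ 2) * (p y / u y - q y / v y)
  set E : ℝ → ℝ := fun x ↦ (u x ^ 2 - v x ^ 2) * (k x (v x) - k x (u x)) +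
    ((v x * p x / u x - q x) ^ 2 + (u x * q x / v x - p x) ^ 2) / r x
  have hW : ∀ x ∈ Icc a b, HasDerivWithinAt W (E x) (Icc a b) x := fun x hx ↦
    hasDerivWithinAt_picone (hu x hx) (hv x hx) (hp x hx) (hq x hx)
      (hu_pos x hx).ne' (hv_pos x hx).ne' (hr x hx).ne'
  have hE : ∀ x ∈ Icc a b, 0 ≤ E x := fun x hx ↦
    add_nonneg ((hk x hx).sq_sub_sq_mul_sub_nonneg (hu_pos x hx) (hv_pos x hx))
      (div_nonneg (by positivity) (hr x hx).le)
  have hW_mono : MonotoneOn W (Icc a b) :=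
    monotoneOn_of_hasDerivWithinAt_nonneg (convex_Icc a b)
      (fun x hx ↦ (hW x hx).continuousWithinAt)
      (fun x hx ↦ (hW x (interior_subset hx)).mono interior_subset)
      (fun x hx ↦ hE x (interior_subset hx))
  have hW_zero : ∀ x ∈ Icc a b, W x = 0 := by
    have hWa : W a = 0 := by simp [W, ha]
    have hWb : W b = 0 := by simp [W, hb]
    intro x hx
    exact le_antisymm (hWb ▸ hW_mono hx (right_mem_Icc.2 hab.le) hx.2)
      (hWa ▸ hW_mono (left_mem_Icc.2 hab.le) hx hx.1)
  intro x hx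
  have hE_zero : E x = 0 :=
    (uniqueDiffOn_Icc hab x hx).eq_deriv _ (hW x hx)
      ((hasDerivWithinAt_const x _ 0).congr hW_zero (hW_zero x hx))
  by_contra hne
  have h₁ := (hk x hx).sq_sub_sq_mul_sub_pos (hu_pos x hx) (hv_pos x hx) hne
  have h₂ : 0 ≤ ((v x * p x / u x - q x) ^ 2 + (u x * q x / v x - p x) ^ 2) / r x :=
    div_nonneg (by positivity) (hr x hx).le
  simp only [E] at hE_zero
  linarith

noncomputable def gfun (u : ℝ → ℝ) (y : ℝ) : ℝ := y * u y / (y + u y ^ 2)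

noncomputable def flux (lam ε : ℝ) (u : ℝ → ℝ) (x : ℝ) : ℝ := -(lam / 4) * ∫ y in ε..x, gfun u y

section

variable {lam ε Λ x : ℝ} {u : ℝ → ℝ}

theorem continuousOn_gfun (hε : 0 < ε) (hu : ContinuousOn u (Icc ε Λ)) :
    ContinuousOn (gfun u) (Icc ε Λ) :=
  (continuousOn_id.mul hu).div (continuousOn_id.add (hu.pow 2)) fun _ hy ↦
    (add_pos_of_pos_of_nonneg (hε.trans_le hy.1) (sq_nonneg _)).ne'

theorem opA_eq_green (hε : 0 < ε) (hu : ContinuousOn u (Icc ε Λ)) (hx : x ∈ Icc ε Λ) :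
    opA lam ε Λ u x = lam / 4 * ((∫ y in ε..x, gfun u y) / x + ∫ y in x..Λ, gfun u y / y) := by
  set K : ℝ → ℝ := fun y ↦ 1 / (y + x + |y - x|) * gfun u y
  have hK : ContinuousOn K (Icc ε Λ) := by
    refine (continuousOn_const.div (by fun_prop) fun y hy ↦ ?_).mul (continuousOn_gfun hε hu)
    linarith [abs_nonneg (y - x), hε.trans_le hy.1, hε.trans_le hx.1]
  have hK_int : ∀ c ∈ Icc ε Λ, ∀ d ∈ Icc ε Λ, IntervalIntegrable K volume c d :=
    fun c hc d hd ↦ (hK.mono (uIcc_subset_Icc hc hd)).intervalIntegrable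
  have hεΛ : ε ≤ Λ := hx.1.trans hx.2
  have hleft : ∫ y in ε..x, K y = (∫ y in ε..x, gfun u y) / (2 * x) := by
    rw [← intervalIntegral.integral_div]
    refine integral_congr fun y hy ↦ ?_
    rw [uIcc_of_le hx.1] at hy
    simp only [K, abs_of_nonpos (sub_nonpos.2 hy.2)]
    ring_nf
  have hright : ∫ y in x..Λ, K y = (∫ y in x..Λ, gfun u y / y) / 2 := by
    rw [← intervalIntegral.integral_div]
    refine integral_congr fun y hy ↦ ?_
    rw [uIcc_of_le hx.2] at hy
    simp only [K, abs_of_nonneg (sub_nonneg.2 hy.1)]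
    ring_nf
  have hA : opA lam ε Λ u x = lam / 2 * ∫ y in ε..Λ, K y := rfl
  rw [hA, ← integral_add_adjacent_intervals (hK_int ε (left_mem_Icc.2 hεΛ) x hx)
    (hK_int x hx Λ (right_mem_Icc.2 hεΛ)), hleft, hright]
  field_simp [(hε.trans_le hx.1).ne']
  ring

theorem hasDerivWithinAt_integral_gfun (hε : 0 < ε) (hu : ContinuousOn u (Icc ε Λ))
    (hx : x ∈ Icc ε Λ) :
    HasDerivWithinAt (fun z ↦ ∫ y in ε..z, gfun u y) (gfun u x) (Icc ε Λ) x := by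
  have : Fact (x ∈ Icc ε Λ) := ⟨hx⟩
  have hg := continuousOn_gfun hε hu
  exact integral_hasDerivWithinAt_right
    ((hg.mono (uIcc_subset_Icc (left_mem_Icc.2 (hx.1.trans hx.2)) hx)).intervalIntegrable)
    (hg.stronglyMeasurableAtFilter_nhdsWithin measurableSet_Icc x) (hg x hx)

theorem hasDerivWithinAt_integral_gfun_div (hε : 0 < ε) (hu : ContinuousOn u (Icc ε Λ))
    (hx : x ∈ Icc ε Λ) :
    HasDerivWithinAt (fun z ↦ ∫ y in z..Λ, gfun u y / y) (-(gfun u x / x)) (Icc ε Λ) x := by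
  have : Fact (x ∈ Icc ε Λ) := ⟨hx⟩
  have hg : ContinuousOn (fun y ↦ gfun u y / y) (Icc ε Λ) :=
    (continuousOn_gfun hε hu).div continuousOn_id fun _ hy ↦ (hε.trans_le hy.1).ne'
  exact integral_hasDerivWithinAt_left
    ((hg.mono (uIcc_subset_Icc hx (right_mem_Icc.2 (hx.1.trans hx.2)))).intervalIntegrable)
    (hg.stronglyMeasurableAtFilter_nhdsWithin measurableSet_Icc x) (hg x hx)

theorem hasDerivWithinAt_opA (hε : 0 < ε) (hu : ContinuousOn u (Icc ε Λ)) (hx : x ∈ Icc ε Λ) :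
    HasDerivWithinAt (opA lam ε Λ u) (flux lam ε u x / x ^ 2) (Icc ε Λ) x := by
  have hx₀ : x ≠ 0 := (hε.trans_le hx.1).ne'
  refine HasDerivWithinAt.congr_of_mem ?_ (fun y hy ↦ opA_eq_green hε hu hy) hx
  refine ((((hasDerivWithinAt_integral_gfun hε hu hx).div (hasDerivWithinAt_id x _) hx₀).add
    (hasDerivWithinAt_integral_gfun_div hε hu hx)).const_mul (lam / 4)).congr_deriv ?_
  simp only [flux, id]
  field_simp
  ring

theorem hasDerivWithinAt_flux (hε : 0 < ε) (hu : ContinuousOn u (Icc ε Λ)) (hx : x ∈ Icc ε Λ) :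
    HasDerivWithinAt (flux lam ε u) (-(lam / 4 * x / (x + u x ^ 2) * u x)) (Icc ε Λ) x :=
  ((hasDerivWithinAt_integral_gfun hε hu hx).const_mul (-(lam / 4))).congr_deriv (by
    simp only [gfun]; ring)

theorem flux_left : flux lam ε u ε = 0 := by
  simp [flux]

theorem flux_right (hε : 0 < ε) (hεΛ : ε ≤ Λ) (hu : ContinuousOn u (Icc ε Λ)) :
    flux lam ε u Λ = -(Λ * opA lam ε Λ u Λ) := by
  rw [opA_eq_green hε hu (right_mem_Icc.2 hεΛ), integral_same, flux]
  field_simp [(hε.trans_le hεΛ).ne']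
  ring

theorem wfun_pos (hε : 0 < ε) (hΛ : 0 < Λ) (hlam : 0 < lam) (hx : 0 < x) :
    0 < wfun lam ε Λ x :=
  mul_pos (by positivity) (sqrt_pos.2 (by positivity))

theorem memV.pos (hu : memV lam ε Λ u) (hε : 0 < ε) (hεΛ : ε < Λ) (hlam : 0 < lam)
    (hx : x ∈ Icc ε Λ) : 0 < u x :=
  (wfun_pos hε (hε.trans hεΛ) hlam (hε.trans_le hx.1)).trans_le (hu.2 x hx).1

end

theorem eqOn_of_eq_opA {lam ε Λ : ℝ} (hε : 0 < ε) (hεΛ : ε < Λ) (hlam : 0 < lam)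
    {u v : ℝ → ℝ} (hu : ContinuousOn u (Icc ε Λ)) (hv : ContinuousOn v (Icc ε Λ))
    (hu_pos : ∀ x ∈ Icc ε Λ, 0 < u x) (hv_pos : ∀ x ∈ Icc ε Λ, 0 < v x)
    (hu_fix : ∀ x ∈ Icc ε Λ, u x = opA lam ε Λ u x)
    (hv_fix : ∀ x ∈ Icc ε Λ, v x = opA lam ε Λ v x) :
    EqOn u v (Icc ε Λ) := by
  have hΛ := right_mem_Icc.2 hεΛ.le
  have flux_div_right : ∀ {w : ℝ → ℝ}, ContinuousOn w (Icc ε Λ) → 0 < w Λ →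
      w Λ = opA lam ε Λ w Λ → flux lam ε w Λ / w Λ = -Λ := fun hw hw_pos hw_fix ↦ by
    rw [flux_right hε hεΛ.le hw, ← hw_fix]
    field_simp
  refine eqOn_of_sturmLiouville_sublinear hεΛ (r := fun x ↦ x ^ 2)
    (k := fun x s ↦ lam / 4 * x / (x + s ^ 2)) (p := flux lam ε u) (q := flux lam ε v)
    (fun x hx ↦ pow_pos (hε.trans_le hx.1) 2)
    (fun x hx ↦ strictAntiOn_div_add_sq (mul_pos (by positivity) (hε.trans_le hx.1))
      (hε.trans_le hx.1).le)
    hu_pos hv_pos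
    (fun x hx ↦ (hasDerivWithinAt_opA hε hu hx).congr_of_mem hu_fix hx)
    (fun x hx ↦ (hasDerivWithinAt_opA hε hv hx).congr_of_mem hv_fix hx)
    (fun x hx ↦ hasDerivWithinAt_flux hε hu hx) (fun x hx ↦ hasDerivWithinAt_flux hε hv hx)
    (by simp [flux_left])
    ((flux_div_right hu (hu_pos Λ hΛ) (hu_fix Λ hΛ)).trans
      (flux_div_right hv (hv_pos Λ hΛ) (hv_fix Λ hΛ)).symm)

theorem stmt_13_general (ε Λ lam : ℝ) (hε : 0 < ε) (hεΛ : ε < Λ) (hlam : 2 < lam)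
    (u₀ : ℝ → ℝ) (hu₀ : memV lam ε Λ u₀)
    (hfix : ∀ x ∈ Set.Icc ε Λ, u₀ x = opA lam ε Λ u₀ x) :
    ∀ v₀ : ℝ → ℝ, memV lam ε Λ v₀ →
      (∀ x ∈ Set.Icc ε Λ, v₀ x = opA lam ε Λ v₀ x) →
      ∀ x ∈ Set.Icc ε Λ, v₀ x = u₀ x := by
  intro v₀ hv₀ hvfix
  have hlam₀ : 0 < lam := by linarith
  exact eqOn_of_eq_opA hε hεΛ hlam₀ hv₀.1 hu₀.1 (fun _ ↦ hv₀.pos hε hεΛ hlam₀)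
    (fun _ ↦ hu₀.pos hε hεΛ hlam₀) hvfix hfix

theorem stmt_13 (ε Λ lam : ℝ) (hε : 0 < ε) (hεΛ : ε < Λ) (hlam : 2 < lam)
    (hratio : ε / Λ ≤ min (1 / 16)
      (((Real.sqrt (lam ^ 2 + 128 * (lam - 2)) - lam) / 64) ^ 2))
    (u₀ : ℝ → ℝ) (hu₀ : memV lam ε Λ u₀)
    (hfix : ∀ x ∈ Set.Icc ε Λ, u₀ x = opA lam ε Λ u₀ x)
    (hsq : ∀ x ∈ Set.Icc ε Λ, u₀ x ≤ Real.sqrt x) :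
    ∀ v₀ : ℝ → ℝ, memV lam ε Λ v₀ →
      (∀ x ∈ Set.Icc ε Λ, v₀ x = opA lam ε Λ v₀ x) →
      ∀ x ∈ Set.Icc ε Λ, v₀ x = u₀ x :=
  stmt_13_general ε Λ lam hε hεΛ hlam u₀ hu₀ hfix
end

section
/- For every real ε > 0 and every x ≥ ε, one has √(x+ε)·{ 1/(√(x+ε) + √ε) + (1/√ε)·ln(√(1 + ε/x) + √(ε/x)) } < 2. -/
/-!
The logarithm is `arsinh √(ε/x)`, and `arsinh t < t` for `t > 0`. Writing `a = √(x+ε)`,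
`b = √ε`, `c = √x`, this bounds the left side strictly by `a/(a+b) + a/c`, which is at most `2`
because `a² = b² + c²` and `b ≤ c` (with equality at `x = ε`, so the strictness of the
`arsinh` bound is essential).
-/

open Real

theorem Real.arsinh_lt_self {t : ℝ} (ht : 0 < t) : arsinh t < t := by
  simpa only [arsinh_sinh] using arsinh_lt_arsinh.2 (self_lt_sinh_iff.2 ht)

theorem Real.log_sqrt_one_add_add_sqrt {u : ℝ} (hu : 0 ≤ u) :
    log (√(1 + u) + √u) = arsinh √u := by
  rw [arsinh, sq_sqrt hu, add_comm √u]

theorem div_add_add_div_le_two_of_sq_eq {a b c : ℝ} (hb : 0 < b) (hbc : b ≤ c) (ha : 0 ≤ a)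
    (habc : a ^ 2 = b ^ 2 + c ^ 2) : a / (a + b) + a / c ≤ 2 := by
  have hc : 0 < c := hb.trans_le hbc
  have hca : c ≤ a := abs_le_of_sq_le_sq' (by nlinarith) ha |>.2
  rw [div_add_div _ _ (by positivity) hc.ne', div_le_iff₀ (by positivity)]
  -- `2c(a + b) - a(a + b + c) = (c - b)(a + b - c)` once `a²` is replaced by `b² + c²`
  nlinarith [mul_nonneg (sub_nonneg.2 hbc) (sub_nonneg.2 hca)]

theorem stmt_16 (ε x : ℝ) (hε : 0 < ε) (hx : ε ≤ x) :
    Real.sqrt (x + ε) *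
        (1 / (Real.sqrt (x + ε) + Real.sqrt ε) +
          (1 / Real.sqrt ε) *
            Real.log (Real.sqrt (1 + ε / x) + Real.sqrt (ε / x))) < 2 := by
  have hx₀ : 0 < x := hε.trans_le hx
  have hA : 0 < √(x + ε) := by positivity
  have hB : 0 < √ε := sqrt_pos.2 hε
  rw [log_sqrt_one_add_add_sqrt (by positivity), sqrt_div' _ hx₀.le]
  calc √(x + ε) * (1 / (√(x + ε) + √ε) + 1 / √ε * arsinh (√ε / √x))
      < √(x + ε) * (1 / (√(x + ε) + √ε) + 1 / √ε * (√ε / √x)) := by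
        gcongr
        exact arsinh_lt_self (by positivity)
    _ = √(x + ε) / (√(x + ε) + √ε) + √(x + ε) / √x := by field_simp
    _ ≤ 2 := div_add_add_div_le_two_of_sq_eq hB (sqrt_le_sqrt hx) hA.le (by
        rw [sq_sqrt hε.le, sq_sqrt hx₀.le, sq_sqrt (by positivity)]; ring)
end
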